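/- arXiv:2110.00132 — 4 statements merged into one kernel-verified Lean document; each statement's English description precedes it below -/
import Mathlib

section
/- Let Λ ⊂ ℝ^n be a full-rank lattice and K ⊂ ℝ^n a closed convex body symmetric about the origin. Then vol(K) < (|Λ ∩ K| + 1) · 2^{n−1} · det(Λ). -/
/-!
A generalized Blichfeldt principle: if `vol(½K) > m · det Λ`, some point lies in `m + 1`
translates `l + ½K`, `l ∈ Λ`, and the pairwise differences of these `m + 1` lattice points
lie in `K` by convexity and symmetry. By Cauchy–Davenport in the torsion-free group `ℝⁿ`
they form at least `2m + 1` points of `Λ ∩ K`.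

If `vol K ≥ (N + 1) 2ⁿ⁻¹ det Λ` with `N = |Λ ∩ K|`, dilate `K` by `1 + ε`: for small `ε`
this adds no lattice points, since `Λ ∩ 2K` is finite and `K` is closed, and it makes the
volume inequality strict. With `m = ⌈N / 2⌉` this produces `2m + 1 > N` points of `Λ ∩ K`.
-/

open MeasureTheory Measure Module Set Filter Topology
open scoped Pointwise ENNReal

theorem exists_lt_encard_setOf_mem_vadd_of_mul_lt_measure {E L : Type*} [MeasurableSpace E]
    {μ : Measure E} {F s : Set E} [AddGroup L] [Countable L] [AddAction L E]
    [MeasurableConstVAdd L E] [VAddInvariantMeasure L E μ] (fund : IsAddFundamentalDomain L F μ)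
    (hs : NullMeasurableSet s μ) {m : ℕ} (h : m * μ F < μ s) :
    ∃ x : E, (m : ℕ∞) < {l : L | x ∈ l +ᵥ s}.encard := by
  contrapose! h
  set A : L → Set E := fun l => (l +ᵥ s) ∩ F
  have hA : ∀ l, NullMeasurableSet (A l) μ := fun l => (hs.vadd l).inter fund.nullMeasurableSet
  have hcount : ∀ x, ∑' l, (A l).indicator 1 x ≤ m * F.indicator (1 : E → ℝ≥0∞) x := by
    intro x
    have hindicator : ∀ l, (A l).indicator (1 : E → ℝ≥0∞) x
        = F.indicator 1 x * {l : L | x ∈ l +ᵥ s}.indicator 1 l := by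
      intro l
      rw [inter_indicator_one, Pi.mul_apply, mul_comm]
      rfl
    rw [tsum_congr hindicator, ENNReal.tsum_mul_left, ← tsum_subtype]
    simp only [Pi.one_apply]
    rw [ENNReal.tsum_set_one, mul_comm]
    gcongr
    exact_mod_cast h x
  calc μ s = ∑' l, μ (A l) := fund.measure_eq_tsum s
    _ = ∑' l, ∫⁻ x, (A l).indicator 1 x ∂μ := by simp_rw [lintegral_indicator_one₀ (hA _)]
    _ = ∫⁻ x, ∑' l, (A l).indicator 1 x ∂μ :=
      (lintegral_tsum fun l => aemeasurable_one.indicator₀ (hA l)).symm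
    _ ≤ ∫⁻ x, m * F.indicator 1 x ∂μ := lintegral_mono hcount
    _ = m * μ F := by
      rw [lintegral_const_mul' _ _ (by simp), lintegral_indicator_one₀ fund.nullMeasurableSet]

theorem Convex.sub_mem_of_mem_vadd_inv_two_smul {E : Type*} [AddCommGroup E] [Module ℝ E]
    {s : Set E} (h_conv : Convex ℝ s) (h_symm : ∀ x ∈ s, -x ∈ s) {a b x : E}
    (ha : x ∈ a +ᵥ (2⁻¹ : ℝ) • s) (hb : x ∈ b +ᵥ (2⁻¹ : ℝ) • s) : a - b ∈ s := by
  rw [mem_vadd_set_iff_neg_vadd_mem, vadd_eq_add, mem_inv_smul_set_iff₀ two_ne_zero] at ha hb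
  convert h_conv hb (h_symm _ ha) (by norm_num : (0 : ℝ) ≤ 2⁻¹)
    (by norm_num : (0 : ℝ) ≤ 2⁻¹) (by norm_num) using 1
  module

theorem le_encard_inter_of_mul_lt_measure {E : Type*} [NormedAddCommGroup E] [NormedSpace ℝ E]
    [FiniteDimensional ℝ E] [MeasurableSpace E] [BorelSpace E] {μ : Measure E}
    [IsAddHaarMeasure μ] {F s : Set E} {L : AddSubgroup E} [Countable L]
    (fund : IsAddFundamentalDomain L F μ) (h_symm : ∀ x ∈ s, -x ∈ s) (h_conv : Convex ℝ s)
    {m : ℕ} (h : m * μ F < μ ((2⁻¹ : ℝ) • s)) :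
    (2 * m + 1 : ℕ∞) ≤ ((L : Set E) ∩ s).encard := by
  classical
  obtain ⟨x, hx⟩ := exists_lt_encard_setOf_mem_vadd_of_mul_lt_measure fund
    ((h_conv.smul _).nullMeasurableSet _) h
  obtain ⟨t, hts, htcard⟩ := exists_subset_encard_eq (Order.add_one_le_of_lt hx)
  obtain ⟨T, rfl⟩ := (finite_of_encard_eq_coe htcard).exists_finset_coe
  rw [encard_coe_eq_coe_finsetCard] at htcard
  set T' : Finset E := T.map (Function.Embedding.subtype _)
  have hT' : T'.card = m + 1 := by rw [Finset.card_map]; exact_mod_cast htcard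
  have hdiff : ((T' - T' : Finset E) : Set E) ⊆ (L : Set E) ∩ s := by
    intro d hd
    obtain ⟨_, ha, _, hb, rfl⟩ := Finset.mem_sub.mp hd
    obtain ⟨a, haT, rfl⟩ := Finset.mem_map.mp ha
    obtain ⟨b, hbT, rfl⟩ := Finset.mem_map.mp hb
    exact ⟨sub_mem a.2 b.2,
      h_conv.sub_mem_of_mem_vadd_inv_two_smul h_symm (hts haT) (hts hbT)⟩
  have : IsAddTorsionFree E := .of_isTorsionFree ℝ E
  have hT'ne : T'.Nonempty := Finset.card_pos.mp (by omega)
  have hcard : 2 * m + 1 ≤ (T' - T').card := by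
    have := cauchy_davenport_of_isAddTorsionFree hT'ne hT'ne.neg
    rw [Finset.card_neg, hT', ← sub_eq_add_neg] at this
    omega
  calc (2 * m + 1 : ℕ∞) ≤ ((T' - T' : Finset E) : Set E).encard := by
        rw [encard_coe_eq_coe_finsetCard]; exact_mod_cast hcard
    _ ≤ _ := encard_le_encard hdiff

theorem eventually_inter_smul_subset {E : Type*} [AddCommGroup E] [Module ℝ E]
    [TopologicalSpace E] [ContinuousSMul ℝ E] {P s : Set E} (hP : P.Finite) (hs : IsClosed s) :
    ∀ᶠ c : ℝ in 𝓝 1, P ∩ c • s ⊆ s := by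
  have hpoint : ∀ p ∈ P, ∀ᶠ c : ℝ in 𝓝 1, p ∈ c • s → p ∈ s := by
    intro p _
    by_cases hp : p ∈ s
    · exact Eventually.of_forall fun _ _ => hp
    have hinv : Tendsto (fun c : ℝ => c⁻¹ • p) (𝓝 1) (𝓝 p) := by
      simpa using (tendsto_inv₀ (one_ne_zero' ℝ)).smul_const p
    filter_upwards [hinv.eventually (hs.isOpen_compl.mem_nhds hp),
      eventually_ne_nhds one_ne_zero] with c hc hc0 hpc
    exact absurd ((mem_smul_set_iff_inv_smul_mem₀ hc0 _ _).mp hpc) hc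
  filter_upwards [(eventually_all_finite hP).mpr hpoint] with c hc p hp using hc p hp.1 hp.2

theorem Convex.smul_set_subset_smul_set {E : Type*} [AddCommGroup E] [Module ℝ E] {s : Set E}
    (hs : Convex ℝ s) (h0 : 0 ∈ s) {a b : ℝ} (ha : 0 < a) (hab : a ≤ b) : a • s ⊆ b • s := by
  rintro _ ⟨y, hy, rfl⟩
  have hb : 0 < b := ha.trans_le hab
  rw [mem_smul_set_iff_inv_smul_mem₀ hb.ne', smul_smul]
  exact hs.smul_mem_of_zero_mem h0 hy ⟨by positivity, inv_mul_le_one_of_le₀ hab hb.le⟩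

theorem exists_pos_inter_one_add_smul_subset {E : Type*} [NormedAddCommGroup E]
    [NormedSpace ℝ E] [ProperSpace E] {P s : Set E} (hP : IsDiscrete P) (hPc : IsClosed P)
    (h_conv : Convex ℝ s) (h_cpt : IsCompact s) (h0 : 0 ∈ s) :
    ∃ ε : ℝ, 0 < ε ∧ P ∩ (1 + ε) • s ⊆ s := by
  have hfin : ((2 : ℝ) • s ∩ P).Finite :=
    Metric.finite_isBounded_inter_isClosed hP (h_cpt.smul (2 : ℝ)).isBounded hPc
  have hone : Tendsto (fun ε : ℝ => 1 + ε) (𝓝[>] 0) (𝓝 1) := by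
    simpa using ((continuous_const_add (1 : ℝ)).tendsto 0).mono_left nhdsWithin_le_nhds
  have hsmall : ∀ᶠ ε in 𝓝[>] (0 : ℝ), ε ≤ 1 :=
    eventually_nhdsWithin_of_eventually_nhds (eventually_le_nhds one_pos)
  obtain ⟨ε, ⟨hsub, hε1⟩, hε0⟩ :=
    ((hone.eventually (eventually_inter_smul_subset hfin h_cpt.isClosed)).and hsmall
      |>.and self_mem_nhdsWithin).exists
  refine ⟨ε, hε0, fun p hp => hsub ⟨⟨?_, hp.1⟩, hp.2⟩⟩
  exact h_conv.smul_set_subset_smul_set h0 (by linarith) (by linarith) hp.2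

theorem inv_two_lt_inv_two_mul_one_add_pow_mul_two_pow_sub_one {ε : ℝ} (hε : 0 < ε) (d : ℕ) :
    (2 : ℝ)⁻¹ < (2⁻¹ * (1 + ε)) ^ d * 2 ^ (d - 1) := by
  rcases d with _ | d
  · norm_num
  have h1 : 1 < (1 + ε) ^ (d + 1) := one_lt_pow₀ (by linarith) d.succ_ne_zero
  have hsimp : (2⁻¹ * (1 + ε)) ^ (d + 1) * 2 ^ (d + 1 - 1) = 2⁻¹ * (1 + ε) ^ (d + 1) := by
    rw [mul_pow, Nat.add_sub_cancel, inv_pow, pow_succ]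
    field_simp
  rw [hsimp]
  linarith

theorem natCast_mul_ofReal_lt_measure_inv_two_mul_one_add_smul {E : Type*}
    [NormedAddCommGroup E] [NormedSpace ℝ E] [FiniteDimensional ℝ E] [MeasurableSpace E]
    [BorelSpace E] (μ : Measure E) [IsAddHaarMeasure μ] {s : Set E} {ε c : ℝ} (hε : 0 < ε)
    (hc : 0 < c) {m N : ℕ} (hm : 2 * m ≤ N + 1)
    (h : ENNReal.ofReal ((N + 1) * 2 ^ (finrank ℝ E - 1) * c) ≤ μ s) :
    m * ENNReal.ofReal c < μ ((2⁻¹ * (1 + ε)) • s) := by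
  set d := finrank ℝ E
  have hm' : (m : ℝ) * 2 ≤ N + 1 := by exact_mod_cast (mul_comm m 2).trans_le hm
  rw [addHaar_smul_of_nonneg μ (by positivity)]
  calc (m : ℝ≥0∞) * ENNReal.ofReal c = ENNReal.ofReal (m * c) := by
        rw [ENNReal.ofReal_mul (by positivity), ENNReal.ofReal_natCast]
    _ < ENNReal.ofReal ((2⁻¹ * (1 + ε)) ^ d * ((N + 1) * 2 ^ (d - 1) * c)) := by
        rw [ENNReal.ofReal_lt_ofReal_iff (by positivity)]
        calc (m : ℝ) * c ≤ 2⁻¹ * ((N + 1) * c) := by nlinarith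
          _ < ((2⁻¹ * (1 + ε)) ^ d * 2 ^ (d - 1)) * ((N + 1) * c) :=
              mul_lt_mul_of_pos_right
                (inv_two_lt_inv_two_mul_one_add_pow_mul_two_pow_sub_one hε d) (by positivity)
          _ = _ := by ring
    _ ≤ ENNReal.ofReal ((2⁻¹ * (1 + ε)) ^ d) * μ s := by
        rw [ENNReal.ofReal_mul (by positivity)]
        gcongr

namespace ZLattice

variable {E : Type*} [NormedAddCommGroup E] [NormedSpace ℝ E] [FiniteDimensional ℝ E]
  [MeasurableSpace E] [BorelSpace E] (L : Submodule ℤ E) [DiscreteTopology L] [IsZLattice ℝ L]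
  (μ : Measure E) [IsAddHaarMeasure μ]

theorem le_encard_inter_of_mul_covolume_lt_measure {s : Set E} (h_symm : ∀ x ∈ s, -x ∈ s)
    (h_conv : Convex ℝ s) {m : ℕ} (h : m * ENNReal.ofReal (covolume L μ) < μ ((2⁻¹ : ℝ) • s)) :
    (2 * m + 1 : ℕ∞) ≤ ((L : Set E) ∩ s).encard := by
  let b := Free.chooseBasis ℤ L
  have fund := isAddFundamentalDomain b μ
  have : Countable L.toAddSubgroup := inferInstanceAs (Countable L)
  rw [covolume_eq_measure_fundamentalDomain L μ fund,
    ofReal_measureReal (ZSpan.fundamentalDomain_isBounded _).measure_lt_top.ne] at h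
  exact le_encard_inter_of_mul_lt_measure (L := L.toAddSubgroup) fund h_symm h_conv h

theorem measure_lt_ofReal_ncard_inter_add_one_mul_two_pow_mul_covolume {s : Set E}
    (h_symm : ∀ x ∈ s, -x ∈ s) (h_conv : Convex ℝ s) (h_cpt : IsCompact s) :
    μ s < ENNReal.ofReal
      ((((L : Set E) ∩ s).ncard + 1) * 2 ^ (finrank ℝ E - 1) * covolume L μ) := by
  set N := ((L : Set E) ∩ s).ncard
  rcases s.eq_empty_or_nonempty with rfl | ⟨x, hx⟩
  · simpa using by have := covolume_pos L μ; positivity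
  have h0 : (0 : E) ∈ s := by
    simpa using h_conv hx (h_symm x hx) (by norm_num : (0 : ℝ) ≤ 2⁻¹)
      (by norm_num : (0 : ℝ) ≤ 2⁻¹) (by norm_num)
  have hclosed : IsClosed (L : Set E) := L.toAddSubgroup.isClosed_of_discrete
  have hfin : ((L : Set E) ∩ s).Finite :=
    (Metric.finite_isBounded_inter_isClosed DiscreteTopology.isDiscrete h_cpt.isBounded
      hclosed).subset (inter_comm _ _).subset
  obtain ⟨ε, hε, hdil⟩ := exists_pos_inter_one_add_smul_subset DiscreteTopology.isDiscrete
    hclosed h_conv h_cpt h0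
  have hsymm_dil : ∀ x ∈ (1 + ε) • s, -x ∈ (1 + ε) • s := by
    rintro _ ⟨y, hy, rfl⟩
    exact ⟨-y, h_symm y hy, smul_neg _ _⟩
  by_contra! hvol
  have hm : 2 * ((N + 1) / 2) ≤ N + 1 := Nat.mul_div_le (N + 1) 2
  have hlt := natCast_mul_ofReal_lt_measure_inv_two_mul_one_add_smul μ hε
    (covolume_pos L μ) hm hvol
  rw [← smul_smul] at hlt
  have hcount := le_encard_inter_of_mul_covolume_lt_measure L μ hsymm_dil (h_conv.smul _) hlt
  have hN : ((2 * ((N + 1) / 2) + 1 : ℕ) : ℕ∞) ≤ N := by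
    rw [hfin.cast_ncard_eq]
    exact_mod_cast hcount.trans (encard_le_encard (subset_inter inter_subset_left hdil))
  have := Nat.cast_le.mp hN
  omega

end ZLattice

theorem Matrix.range_mulVec_intCast_eq_span_col {m n : Type*} [Fintype n] {R : Type*} [Ring R]
    (Q : Matrix m n R) :
    Set.range (fun v : n → ℤ => Q.mulVec (fun j => (v j : R)))
      = Submodule.span ℤ (range Q.col) := by
  ext x
  rw [SetLike.mem_coe, Submodule.mem_span_range_iff_exists_fun]
  refine exists_congr fun c => ?_
  suffices Q.mulVec (fun j => (c j : R)) = ∑ i, c i • Q.col i by rw [← this]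
  ext k
  simp [Matrix.mulVec, dotProduct, Finset.sum_apply, Int.cast_comm]

/-- Corollary of van der Corput's theorem: for a full-rank lattice `Λ = Λ(Q) ⊂ ℝ^n` and a
compact convex body `K` symmetric about the origin,
`vol(K) < (|Λ ∩ K| + 1)·2^{n−1}·det(Λ)`. -/
theorem stmt_7 {n : ℕ} (Q : Matrix (Fin n) (Fin n) ℝ) (hQ : Q.det ≠ 0)
    (K : Set (Fin n → ℝ)) (hconv : Convex ℝ K) (hcpt : IsCompact K)
    (hsymm : ∀ x ∈ K, -x ∈ K) :
    volume K <
      ENNReal.ofReal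
        ((((Set.range (fun v : Fin n → ℤ => Q.mulVec (fun j => (v j : ℝ))) ∩ K).ncard : ℝ) + 1) *
          (2 : ℝ) ^ (n - 1) * |Q.det|) := by
  have hcols : LinearIndependent ℝ Q.col :=
    Matrix.linearIndependent_cols_iff_isUnit.mpr ((Q.isUnit_iff_isUnit_det).mpr hQ.isUnit)
  let b := basisOfLinearIndependentOfCardEqFinrank' Q.col hcols (by simp)
  have hcov : ZLattice.covolume (Submodule.span ℤ (range b)) = |Q.det| := by
    rw [ZLattice.covolume_eq_measure_fundamentalDomain _ _
      (ZSpan.isAddFundamentalDomain b volume), ZSpan.volume_real_fundamentalDomain,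
      ← Matrix.det_transpose]
    congr 2
    ext i j
    simp [b]
  have hvol := ZLattice.measure_lt_ofReal_ncard_inter_add_one_mul_two_pow_mul_covolume
    (Submodule.span ℤ (range b)) volume hsymm hconv hcpt
  rwa [hcov, finrank_fin_fun, coe_basisOfLinearIndependentOfCardEqFinrank',
    ← Q.range_mulVec_intCast_eq_span_col] at hvol
end

section
/- Let B ∈ ℤ^{ℓ×k} (ℓ ≤ k) have full row rank and let C ∈ ℤ^{r×ℓ} be right-invertible over ℤ (there is an integer matrix C♯ with C·C♯ = I_r). Then the product of the elementary divisors of C·B is at most the product of the elementary divisors of B, i.e., det(Σ(CB)) ≤ det(Σ(B)). -/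
/-!
A right-invertible `C` can be completed one row at a time to a square invertible matrix: over a
Bézout domain the nonzero idempotent `1 - C♯ * C` has a fixed row of content one, which pairs to
`1` with a fixed column. Laplace expansion along an added row shows that a common divisor of the
maximal minors of `C * B` also divides those of the enlarged product, and once `C` is square the
maximal minors of `C * B` are unit multiples of those of `B`. So the gcd of the maximal minors
of `C * B` divides that of `B`, which is positive because `B` has full row rank.
-/

open Matrix

namespace Matrix

theorem exists_det_submatrix_ne_zero_of_rank_eq_card {K m n : Type*} [Field K] [Fintype m]
    [DecidableEq m] [Fintype n] (A : Matrix m n K) (hA : A.rank = Fintype.card m) :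
    ∃ e : m ↪ n, (A.submatrix id e).det ≠ 0 := by
  obtain ⟨κ, a, ha, hspan, hind⟩ := exists_linearIndependent' K A.col
  have : Fintype κ := Fintype.ofInjective a ha
  have hcard : Fintype.card κ = Fintype.card m := by
    rw [← finrank_span_eq_card hind, hspan, ← rank_eq_finrank_span_cols, hA]
  let σ : m ≃ κ := Fintype.equivOfCardEq hcard.symm
  refine ⟨σ.toEmbedding.trans ⟨a, ha⟩, nonsingular_iff_det_ne_zero.mp ?_⟩
  exact linearIndependent_col_iff.mp (hind.comp σ σ.injective)

theorem rank_le_rank_map_algebraMap {R K m n : Type*} [CommRing R] [Field K] [Algebra R K]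
    [IsFractionRing R K] [Fintype n] (A : Matrix m n R) :
    A.rank ≤ (A.map (algebraMap R K)).rank := by
  obtain ⟨y, hy⟩ :=
    exists_linearIndependent_of_le_finrank (R := R) (M := LinearMap.range A.mulVecLin) le_rfl
  let φ : (m → R) →ₗ[R] (m → K) := (Algebra.linearMap R K).compLeft m
  have hφ : Function.Injective φ := fun x x' h =>
    funext fun i => IsFractionRing.injective R K (congr_fun h i)
  have hind : LinearIndependent K (fun i => φ (y i)) :=
    (LinearIndependent.iff_fractionRing R K).mp
      ((hy.map' _ (Submodule.ker_subtype _)).map' φ (LinearMap.ker_eq_bot.mpr hφ))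
  have hmem : ∀ i, φ (y i) ∈ LinearMap.range (A.map (algebraMap R K)).mulVecLin := by
    intro i
    obtain ⟨z, hz⟩ := (y i).2
    exact ⟨algebraMap R K ∘ z, funext fun j => by simp [φ, ← hz, RingHom.map_mulVec]⟩
  calc A.rank = Fintype.card (Fin A.rank) := (Fintype.card_fin _).symm
    _ ≤ (Set.range fun i => φ (y i)).finrank K := linearIndependent_iff_card_le_finrank_span.mp hind
    _ ≤ _ := Submodule.finrank_mono (Submodule.span_le.mpr (Set.range_subset_iff.mpr hmem))

theorem exists_det_submatrix_ne_zero_of_rank_eq_card_of_isDomain {R m n : Type*} [CommRing R]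
    [IsDomain R] [Fintype m] [DecidableEq m] [Fintype n] (A : Matrix m n R)
    (hA : A.rank = Fintype.card m) : ∃ e : m ↪ n, (A.submatrix id e).det ≠ 0 := by
  let φ := algebraMap R (FractionRing R)
  have hrank : (A.map φ).rank = Fintype.card m :=
    le_antisymm (rank_le_card_height _) (hA ▸ rank_le_rank_map_algebraMap A)
  obtain ⟨e, he⟩ := exists_det_submatrix_ne_zero_of_rank_eq_card _ hrank
  refine ⟨e, fun h0 => he ?_⟩
  rw [submatrix_map, ← RingHom.mapMatrix_apply, ← RingHom.map_det, h0, map_zero]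

theorem card_le_of_mul_eq_one {R : Type*} [CommRing R] [Nontrivial R] {m l : ℕ}
    {C : Matrix (Fin m) (Fin l) R} {Cs : Matrix (Fin l) (Fin m) R} (h : C * Cs = 1) : m ≤ l := by
  simpa [h] using (rank_mul_le_left C Cs).trans (rank_le_width C)

theorem cons_mul_cons_eq_one {R : Type*} [Semiring R] {m l : ℕ} {C : Matrix (Fin m) (Fin l) R}
    {Cs : Matrix (Fin l) (Fin m) R} {v w : Fin l → R} (h : C * Cs = 1) (hw : C *ᵥ w = 0)
    (hv : v ᵥ* Cs = 0) (hvw : v ⬝ᵥ w = 1) :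
    of (vecCons v C) * of (fun j => vecCons (w j) (Cs j)) = 1 := by
  ext i j
  refine Fin.cases ?_ (fun i => ?_) i <;> refine Fin.cases ?_ (fun j => ?_) j
  · exact hvw.trans (one_apply_eq 0).symm
  · exact (congr_fun hv j).trans (one_apply_ne (Fin.succ_ne_zero j).symm).symm
  · exact (congr_fun hw i).trans (one_apply_ne (Fin.succ_ne_zero i)).symm
  · exact (congr_fun₂ h i j).trans (by simp [one_apply])

theorem dvd_det_submatrix_of_dvd_det_submatrix_succ {R : Type*} [CommRing R] {m n : ℕ}
    (N : Matrix (Fin (m + 1)) (Fin n) R) {g : R}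
    (hg : ∀ e : Fin m ↪ Fin n, g ∣ (N.submatrix Fin.succ e).det) (e : Fin (m + 1) ↪ Fin n) :
    g ∣ (N.submatrix id e).det := by
  rw [det_succ_row_zero]
  exact Finset.dvd_sum fun j _ => (hg (j.succAboveEmb.trans e)).mul_left _

section BezoutDomain

variable {R : Type*} [CommRing R] [IsDomain R] [IsBezout R] [NormalizedGCDMonoid R]

theorem exists_vecMul_eq_self_dotProduct_eq_one {n : Type*} [Fintype n] [DecidableEq n]
    {K : Matrix n n R} (hK : IsIdempotentElem K) (hK0 : K ≠ 0) :
    ∃ v w : n → R, v ᵥ* K = v ∧ K *ᵥ w = w ∧ v ⬝ᵥ w = 1 := by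
  obtain ⟨i, hi⟩ : ∃ i, K i ≠ 0 := by
    by_contra! h
    exact hK0 (funext h)
  have hrow : K i ᵥ* K = K i := by
    ext j
    simpa [mul_apply, vecMul, dotProduct] using congr_fun₂ hK.eq i j
  obtain ⟨v, hv, hv1⟩ := Finset.extract_gcd (K i) ⟨i, Finset.mem_univ i⟩
  have hg : Finset.univ.gcd (K i) ≠ 0 := fun h0 =>
    hi (funext fun j => Finset.gcd_eq_zero_iff.mp h0 j (Finset.mem_univ j))
  have hKi : K i = Finset.univ.gcd (K i) • v := funext fun j => hv j (Finset.mem_univ j)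
  have hvK : v ᵥ* K = v := by
    refine smul_right_injective (n → R) hg ?_
    dsimp only
    rw [← smul_vecMul, ← hKi, hrow]
  obtain ⟨w, hw⟩ := Finset.gcd_eq_sum_mul Finset.univ v
  refine ⟨v, K *ᵥ w, hvK, by rw [mulVec_mulVec, hK.eq], ?_⟩
  rw [dotProduct_mulVec, hvK, ← hv1, hw]
  rfl

theorem exists_cons_mul_eq_one {m l : ℕ} {C : Matrix (Fin m) (Fin l) R}
    {Cs : Matrix (Fin l) (Fin m) R} (h : C * Cs = 1) (hml : m < l) :
    ∃ (v : Fin l → R) (Cs' : Matrix (Fin l) (Fin (m + 1)) R), of (vecCons v C) * Cs' = 1 := by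
  set K : Matrix (Fin l) (Fin l) R := 1 - Cs * C
  have hP : IsIdempotentElem (Cs * C) := by
    rw [IsIdempotentElem, Matrix.mul_assoc, ← Matrix.mul_assoc C, h, Matrix.one_mul]
  have hK0 : K ≠ 0 := fun h0 =>
    hml.not_ge (card_le_of_mul_eq_one (sub_eq_zero.mp h0).symm)
  have hCK : C * K = 0 := by
    rw [Matrix.mul_sub, Matrix.mul_one, ← Matrix.mul_assoc, h, Matrix.one_mul, sub_self]
  have hKCs : K * Cs = 0 := by
    rw [Matrix.sub_mul, Matrix.one_mul, Matrix.mul_assoc, h, Matrix.mul_one, sub_self]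
  obtain ⟨v, w, hvK, hKw, hvw⟩ := exists_vecMul_eq_self_dotProduct_eq_one hP.one_sub hK0
  refine ⟨v, _, cons_mul_cons_eq_one h ?_ ?_ hvw⟩
  · rw [← hKw, mulVec_mulVec, hCK, zero_mulVec]
  · rw [← hvK, vecMul_vecMul, hKCs, vecMul_zero]

theorem dvd_det_submatrix_of_dvd_det_submatrix_mul {m l n : ℕ} {C : Matrix (Fin m) (Fin l) R}
    (hC : ∃ Cs : Matrix (Fin l) (Fin m) R, C * Cs = 1) {M : Matrix (Fin l) (Fin n) R} {g : R}
    (hg : ∀ e : Fin m ↪ Fin n, g ∣ ((C * M).submatrix id e).det) (e : Fin l ↪ Fin n) :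
    g ∣ (M.submatrix id e).det := by
  obtain ⟨Cs, hCs⟩ := hC
  have hml := card_le_of_mul_eq_one hCs
  induction hd : l - m generalizing m with
  | zero =>
    obtain rfl : m = l := by omega
    have := hg e
    rwa [submatrix_mul _ _ _ id _ Function.bijective_id, submatrix_id_id, det_mul,
      (isUnit_det_of_right_inverse hCs).dvd_mul_left] at this
  | succ d ih =>
    obtain ⟨v, Cs', hCs'⟩ := exists_cons_mul_eq_one hCs (by omega)
    refine ih (fun e' => dvd_det_submatrix_of_dvd_det_submatrix_succ _ (fun e'' => ?_) e')
      Cs' hCs' (card_le_of_mul_eq_one hCs') (by omega)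
    exact hg e''

end BezoutDomain

end Matrix

theorem stmt_10_general {r l k : ℕ} (B : Matrix (Fin l) (Fin k) ℤ)
    (hB : B.rank = l) (C : Matrix (Fin r) (Fin l) ℤ)
    (hC : ∃ Cs : Matrix (Fin l) (Fin r) ℤ, C * Cs = 1) :
    Finset.univ.gcd (fun f : Fin r ↪ Fin k => ((C * B).submatrix id (⇑f)).det) ≤
      Finset.univ.gcd (fun f : Fin l ↪ Fin k => (B.submatrix id (⇑f)).det) := by
  obtain ⟨f, hf⟩ :=
    exists_det_submatrix_ne_zero_of_rank_eq_card_of_isDomain B (by rwa [Fintype.card_fin])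
  have hD : Finset.univ.gcd (fun f : Fin l ↪ Fin k => (B.submatrix id (⇑f)).det) ≠ 0 :=
    fun h0 => hf (Finset.gcd_eq_zero_iff.mp h0 f (Finset.mem_univ f))
  refine Int.le_of_dvd
    ((Int.nonneg_of_normalize_eq_self Finset.normalize_gcd).lt_of_ne' hD) ?_
  refine Finset.dvd_gcd fun e _ => dvd_det_submatrix_of_dvd_det_submatrix_mul hC (fun e' => ?_) e
  exact Finset.gcd_dvd (Finset.mem_univ e')

/-- Let `B ∈ ℤ^{l×k}` (`l ≤ k`) have full row rank and `C ∈ ℤ^{r×l}` be right-invertible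
over ℤ.  Then the product of the elementary divisors of `C·B` is at most the product of
the elementary divisors of `B`: `det(Σ(CB)) ≤ det(Σ(B))`, where `det(Σ(M))` equals the
positive gcd of the maximal-size minors of `M`. -/
theorem stmt_10 {r l k : ℕ} (hlk : l ≤ k) (B : Matrix (Fin l) (Fin k) ℤ)
    (hB : B.rank = l) (C : Matrix (Fin r) (Fin l) ℤ)
    (hC : ∃ Cs : Matrix (Fin l) (Fin r) ℤ, C * Cs = 1) :
    Finset.univ.gcd (fun f : Fin r ↪ Fin k => ((C * B).submatrix id (⇑f)).det) ≤
      Finset.univ.gcd (fun f : Fin l ↪ Fin k => (B.submatrix id (⇑f)).det) :=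
  stmt_10_general B hB C hC
end

section
/- For any full row-rank integer matrix Q ∈ ℤ^{m×n} and any odd prime q satisfying q > 1 + 2·√(det(Q·Qᵀ)), the reduction of Q modulo q represents the same matroid as Q: a set of columns of Q is linearly independent over ℚ if and only if the corresponding set of columns of Q mod q is linearly independent over 𝔽_q. -/
/-!
Since `Q` has full row rank over `ℚ`, every independent set of columns extends to `m` columns
whose `m × m` minor `D` is nonzero. By the Cauchy–Binet formula `det (Q Qᵀ)` is the sum of the
squares of all maximal minors, so `D² ≤ det (Q Qᵀ) < q²`; hence `q ∤ D`, the minor stays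
invertible mod `q`, and the chosen columns stay independent over `𝔽_q`. Conversely, an integer
relation among the columns can be made primitive, and a primitive relation survives reduction
mod `q`.
-/

open Finset Module nonZeroDivisors

theorem linearIndependent_int_of_linearIndependent_zmod {ι κ : Type*} [Finite ι] {p : ℕ}
    [Fact p.Prime] {v : ι → κ → ℤ}
    (h : LinearIndependent (ZMod p) fun i k => (v i k : ZMod p)) :
    LinearIndependent ℤ v := by
  have := Fintype.ofFinite ι
  rw [Fintype.linearIndependent_iff] at h ⊢
  intro g hg i₀
  by_contra hi₀
  obtain ⟨g', hgg', hg'⟩ := extract_gcd g ⟨i₀, mem_univ _⟩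
  have hd : univ.gcd g ≠ 0 := fun h0 => hi₀ (gcd_eq_zero_iff.mp h0 i₀ (mem_univ _))
  have hrel : ∑ i, g' i • v i = 0 := by
    have : univ.gcd g • ∑ i, g' i • v i = 0 := by
      simpa only [smul_sum, smul_smul, ← hgg' _ (mem_univ _)] using hg
    exact (smul_eq_zero.mp this).resolve_left hd
  have hmod : ∀ i, ((g' i : ℤ) : ZMod p) = 0 := h _ <| by
    ext k
    simpa using congrArg (Int.cast : ℤ → ZMod p) (congrFun hrel k)
  have hdvd : (p : ℤ) ∣ 1 :=
    hg' ▸ dvd_gcd fun i _ => (ZMod.intCast_zmod_eq_zero_iff_dvd _ _).mp (hmod i)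
  exact (Fact.out : p.Prime).one_lt.ne'
    (by exact_mod_cast Int.eq_one_of_dvd_one (by positivity) hdvd)

namespace Matrix

open Equiv

section CauchyBinet

variable {R : Type*} [CommRing R] {m n : Type*} [Fintype m] [DecidableEq m] [Fintype n]

theorem det_mul_eq_sum_det_submatrix_mul_prod (A : Matrix m n R) (B : Matrix n m R) :
    (A * B).det = ∑ p : m → n, (A.submatrix id p).det * ∏ i, B (p i) i := by
  simp only [det_apply', mul_apply, prod_univ_sum, mul_sum, Fintype.piFinset_univ, sum_mul,
    prod_mul_distrib, submatrix_apply, id_eq]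
  rw [Finset.sum_comm]
  simp only [mul_assoc]

theorem factorial_card_mul_det_mul_transpose (A : Matrix m n R) :
    ((Fintype.card m).factorial : R) * (A * Aᵀ).det =
      ∑ p : m → n, (A.submatrix id p).det ^ 2 := by
  have hperm (σ : Perm m) : (A * Aᵀ).det =
      ∑ p : m → n, (A.submatrix id p).det * ((Perm.sign σ : R) * ∏ i, A i (p (σ i))) := by
    rw [det_mul_eq_sum_det_submatrix_mul_prod]
    refine Fintype.sum_bijective (· ∘ σ.symm) (Equiv.arrowCongr σ (Equiv.refl n)).bijective
      _ _ fun p => ?_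
    have : A.submatrix id p = (A.submatrix id (p ∘ σ.symm)).submatrix id σ := by
      ext i j; simp
    rw [this, det_permute']
    simp only [Function.comp_apply, symm_apply_apply, transpose_apply]
    ring
  calc ((Fintype.card m).factorial : R) * (A * Aᵀ).det
      = ∑ σ : Perm m, (A * Aᵀ).det := by simp [Fintype.card_perm]
    _ = ∑ p : m → n, (A.submatrix id p).det * (A.submatrix id p)ᵀ.det := by
      rw [Finset.sum_congr rfl fun σ _ => hperm σ, Finset.sum_comm]
      simp only [← mul_sum, det_apply', transpose_apply, submatrix_apply, id_eq]
    _ = _ := by simp only [det_transpose, sq]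

theorem sq_det_submatrix_le_det_mul_transpose [LinearOrder R] [IsStrictOrderedRing R]
    (A : Matrix m n R) {b : m → n} (hb : Function.Injective b) :
    (A.submatrix id b).det ^ 2 ≤ (A * Aᵀ).det := by
  let e : Perm m ↪ (m → n) :=
    ⟨(b ∘ ·), fun σ τ h => Equiv.ext fun i => hb (congrFun h i)⟩
  have hσ (σ : Perm m) : (A.submatrix id (e σ)).det ^ 2 = (A.submatrix id b).det ^ 2 := by
    rw [show A.submatrix id (e σ) = (A.submatrix id b).submatrix id σ from rfl, det_permute',
      mul_pow, ← Int.cast_pow, ← Units.val_pow_eq_pow_val, Int.units_sq, Units.val_one,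
      Int.cast_one, one_mul]
  have hle : ((Fintype.card m).factorial : R) * (A.submatrix id b).det ^ 2 ≤
      ((Fintype.card m).factorial : R) * (A * Aᵀ).det :=
    calc ((Fintype.card m).factorial : R) * (A.submatrix id b).det ^ 2
        = ∑ σ : Perm m, (A.submatrix id (e σ)).det ^ 2 := by simp [hσ, Fintype.card_perm]
      _ = ∑ p ∈ univ.map e, (A.submatrix id p).det ^ 2 := by rw [sum_map]
      _ ≤ ∑ p : m → n, (A.submatrix id p).det ^ 2 :=
        sum_le_univ_sum_of_nonneg fun _ => sq_nonneg _
      _ = _ := (factorial_card_mul_det_mul_transpose A).symm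
  exact le_of_mul_le_mul_left hle (by positivity)

end CauchyBinet

theorem rank_map_algebraMap {R K : Type*} [CommRing R] [IsDomain R] [Field K] [Algebra R K]
    [IsFractionRing R K] {m n : Type*} [Finite m] [Fintype n] (A : Matrix m n R) :
    (A.map (algebraMap R K)).rank = A.rank := by
  let f : (m → R) →ₗ[R] (m → K) := .pi fun i => Algebra.linearMap R K ∘ₗ .proj i
  have hcols : f '' Set.range A.col = Set.range (A.map (algebraMap R K)).col := by
    rw [← Set.range_comp]; rfl
  rw [rank_eq_finrank_span_cols, rank_eq_finrank_span_cols, ← hcols,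
    ← Submodule.localized'_span K R⁰ f, IsLocalization.finrank_eq K R⁰ le_rfl,
    IsLocalizedModule.finrank_eq R⁰ ((Submodule.span R (Set.range A.col)).toLocalized' K R⁰ f)
      le_rfl]

theorem exists_det_submatrix_ne_zero_of_linearIndepOn {K : Type*} [Field K]
    {m n : Type*} [Fintype m] [DecidableEq m] [Fintype n] {A : Matrix m n K}
    (hA : A.rank = Fintype.card m) {s : Set n} (hs : LinearIndepOn K A.col s) :
    ∃ φ : m → n, (A.submatrix id φ).det ≠ 0 ∧ s ⊆ Set.range φ := by
  have hspan : Submodule.span K (Set.range A.col) = ⊤ := Submodule.eq_top_of_finrank_eq <| by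
    rw [← rank_eq_finrank_span_cols, hA, finrank_fintype_fun_eq_card]
  set t := hs.extend (Set.subset_univ s)
  have ht : LinearIndepOn K A.col t := hs.linearIndepOn_extend _
  have htspan : ⊤ ≤ Submodule.span K (Set.range fun j : t => A.col j) := by
    rw [← hspan, ← Set.image_univ, ← Set.image_eq_range]
    exact Submodule.span_le.mpr (hs.image_subset_span_image_extend _)
  let e : m ≃ t := (Pi.basisFun K m).indexEquiv (Basis.mk ht htspan)
  refine ⟨Subtype.val ∘ e, ?_,
    fun j hj => ⟨e.symm ⟨j, hs.subset_extend _ hj⟩, by simp⟩⟩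
  have hcols : LinearIndependent K (A.submatrix id (Subtype.val ∘ e)).col := ht.comp e e.injective
  exact (isUnit_iff_isUnit_det _).mp (linearIndependent_cols_iff_isUnit.mp hcols) |>.ne_zero

theorem isUnit_det_map_intCast_of_natAbs_lt {m : Type*} [Fintype m] [DecidableEq m] {p : ℕ}
    [Fact p.Prime] {B : Matrix m m ℤ} (h0 : B.det ≠ 0) (hlt : B.det.natAbs < p) :
    IsUnit (B.map (Int.cast : ℤ → ZMod p)).det := by
  rw [← Int.cast_det, isUnit_iff_ne_zero, Ne, ZMod.intCast_zmod_eq_zero_iff_dvd, Int.natCast_dvd]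
  exact fun hdvd => (Nat.le_of_dvd (Int.natAbs_pos.mpr h0) hdvd).not_gt hlt

end Matrix

theorem stmt_11_general {m n : ℕ} (Q : Matrix (Fin m) (Fin n) ℤ) (hrank : Q.rank = m)
    (q : ℕ) [Fact q.Prime]
    (hq : (1 : ℝ) + 2 * Real.sqrt (((Q * Q.transpose).det : ℤ) : ℝ) < (q : ℝ))
    (s : Set (Fin n)) :
    LinearIndependent ℚ (fun j : s => fun i => ((Q i j.1 : ℤ) : ℚ)) ↔
      LinearIndependent (ZMod q) (fun j : s => fun i => ((Q i j.1 : ℤ) : ZMod q)) := by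
  refine ⟨fun hs => ?_, fun h => (linearIndependent_algebraMap_comp_iff (S := ℚ)
    (v := fun (j : s) i => Q i j.1)).mpr (linearIndependent_int_of_linearIndependent_zmod h)⟩
  have hA : (Q.map (algebraMap ℤ ℚ)).rank = Fintype.card (Fin m) := by
    rw [Matrix.rank_map_algebraMap, hrank, Fintype.card_fin]
  obtain ⟨φ, hdet, hsφ⟩ := Matrix.exists_det_submatrix_ne_zero_of_linearIndepOn hA hs
  have hD : (Q.submatrix id φ).det ≠ 0 := by
    contrapose! hdet
    rw [Matrix.submatrix_map, ← RingHom.mapMatrix_apply, ← RingHom.map_det, hdet, map_zero]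
  have hφinj : Function.Injective φ := fun i j hij => by
    by_contra hne
    exact hD (Matrix.det_zero_of_column_eq hne fun k => by simp [hij])
  have hlt : (Q.submatrix id φ).det.natAbs < q := by
    have hsq := Real.abs_le_sqrt (x := ((Q.submatrix id φ).det : ℝ))
      (y := (((Q * Q.transpose).det : ℤ) : ℝ))
      (by exact_mod_cast Matrix.sq_det_submatrix_le_det_mul_transpose Q hφinj)
    have hsqrt := Real.sqrt_nonneg (((Q * Q.transpose).det : ℤ) : ℝ)
    exact_mod_cast (show ((Q.submatrix id φ).det.natAbs : ℝ) < q by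
      rw [Nat.cast_natAbs, Int.cast_abs]; linarith)
  have hcols : LinearIndependent (ZMod q) ((fun j i => (Q i j : ZMod q)) ∘ φ) :=
    Matrix.linearIndependent_cols_iff_isUnit.mpr <|
      (Matrix.isUnit_iff_isUnit_det _).mpr (Matrix.isUnit_det_map_intCast_of_natAbs_lt hD hlt)
  exact ((linearIndepOn_range_iff hφinj _).mpr hcols).mono hsφ

/-- For a full row-rank integer matrix `Q ∈ ℤ^{m×n}` and an odd prime `q` with
`q > 1 + 2·√(det(Q·Qᵀ))`, the reduction of `Q` mod `q` represents the same matroid as `Q`: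
a set of columns of `Q` is linearly independent over ℚ iff the corresponding columns of
`Q mod q` are linearly independent over `𝔽_q = ZMod q`. -/
theorem stmt_11 {m n : ℕ} (Q : Matrix (Fin m) (Fin n) ℤ) (hrank : Q.rank = m)
    (q : ℕ) [Fact q.Prime] (hodd : Odd q)
    (hq : (1 : ℝ) + 2 * Real.sqrt (((Q * Q.transpose).det : ℤ) : ℝ) < (q : ℝ))
    (s : Set (Fin n)) :
    LinearIndependent ℚ (fun j : s => fun i => ((Q i j.1 : ℤ) : ℚ)) ↔
      LinearIndependent (ZMod q) (fun j : s => fun i => ((Q i j.1 : ℤ) : ZMod q)) :=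
  stmt_11_general Q hrank q hq s
end

section
/- (Pinsker-type bounds) For jointly distributed random variables X and Y on finite alphabets, the mutual information I(X;Y) and the total-variation distance T(X;Y) = d_TV(P_{XY}, P_X × P_Y) satisfy: I(X;Y) ≥ 2·T(X;Y)² (in nats), and I(X;Y) ≤ log(min(|𝒳|,|𝒴|) − 1)·T(X;Y) + h_b(T(X;Y)), where h_b is the binary entropy function. -/
/-!
Lower bound (Pinsker): the pointwise inequality `a log (a/b) ≥ (a - b) + 3/2 (a - b)² / (a + 2b)`
(convexity of `r log r - r + 1 - 3/2 (r - 1)² / (r + 2)`, which vanishes to second order at `r = 1`)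
summed over the alphabet, together with Cauchy–Schwarz and `∑ (a + 2b) = 3`, gives
`(∑ |a - b|)² ≤ 3 ∑ (a - b)² / (a + 2b) ≤ 2 D(a ‖ b)`.

Upper bound: write `I(X;Y) = ∑_y P(y) (H(X) - H(X | Y = y))`. A maximal coupling of `P_X` and
`P_{X|Y=y}` differs off the diagonal with probability `δ_y = d_TV(P_X, P_{X|Y=y})`, so Fano's
inequality bounds each bracket by the `|𝒳|`-ary entropy `δ_y log (|𝒳| - 1) + h_b(δ_y)`. This
function is concave and `∑_y P(y) δ_y = T(X;Y)`, so Jensen's inequality finishes the proof;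
by symmetry `|𝒳|` may be replaced by `|𝒴|`.
-/

open Real Set Finset

noncomputable def pinskerGap (r : ℝ) : ℝ := r * log r - r + 1 - 3 / 2 * (r - 1) ^ 2 / (r + 2)

lemma hasDerivAt_pinskerGap {r : ℝ} (hr : 0 < r) :
    HasDerivAt pinskerGap (log r - 3 / 2 * ((r - 1) * (r + 5)) / (r + 2) ^ 2) r := by
  have h := (((hasDerivAt_mul_log hr.ne').sub (hasDerivAt_id r)).add_const 1).sub
    ((((hasDerivAt_id r).sub_const 1).pow 2).const_mul (3 / 2 : ℝ) |>.div
      ((hasDerivAt_id r).add_const 2) (by positivity))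
  refine h.congr_deriv ?_
  simp only [id, Pi.pow_apply]
  field_simp
  ring

lemma hasDerivAt_deriv_pinskerGap {r : ℝ} (hr : 0 < r) :
    HasDerivAt (fun r => log r - 3 / 2 * ((r - 1) * (r + 5)) / (r + 2) ^ 2)
      (r⁻¹ - 27 / (r + 2) ^ 3) r := by
  have h := (hasDerivAt_log hr.ne').sub
    (((((hasDerivAt_id r).sub_const 1).mul ((hasDerivAt_id r).add_const 5)).const_mul
      (3 / 2 : ℝ)).div (((hasDerivAt_id r).add_const 2).pow 2) (by simp; positivity))
  refine h.congr_deriv ?_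
  simp only [id, Pi.pow_apply, Pi.mul_apply]
  field_simp
  ring

lemma convexOn_pinskerGap : ConvexOn ℝ (Ioi 0) pinskerGap := by
  refine convexOn_of_hasDerivWithinAt2_nonneg (convex_Ioi 0)
    (f' := fun r => log r - 3 / 2 * ((r - 1) * (r + 5)) / (r + 2) ^ 2)
    (f'' := fun r => r⁻¹ - 27 / (r + 2) ^ 3)
    (fun r hr => (hasDerivAt_pinskerGap hr).continuousAt.continuousWithinAt) ?_ ?_ ?_ <;>
    rw [interior_Ioi]
  · exact fun r hr => (hasDerivAt_pinskerGap hr).hasDerivWithinAt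
  · exact fun r hr => (hasDerivAt_deriv_pinskerGap hr).hasDerivWithinAt
  · intro r (hr : 0 < r)
    have amgm : 27 * r ≤ (r + 2) ^ 3 := by nlinarith [sq_nonneg (r - 1)]
    rw [sub_nonneg, div_le_iff₀ (by positivity), inv_mul_eq_div, le_div_iff₀ hr]
    linarith

lemma pinskerGap_nonneg {r : ℝ} (hr : 0 < r) : 0 ≤ pinskerGap r := by
  have hmin : IsMinOn pinskerGap (Ioi 0) 1 := by
    refine convexOn_pinskerGap.isMinOn_of_rightDeriv_eq_zero (by simp) ?_
    rw [((hasDerivAt_pinskerGap one_pos).hasDerivWithinAt).derivWithin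
      (uniqueDiffWithinAt_Ioi 1)]
    norm_num
  simpa [pinskerGap] using hmin hr

lemma sub_add_sq_div_le_mul_log_div {a b : ℝ} (ha : 0 ≤ a) (hb : 0 ≤ b) (hab : b = 0 → a = 0) :
    a - b + 3 / 2 * ((a - b) ^ 2 / (a + 2 * b)) ≤ a * log (a / b) := by
  rcases ha.eq_or_lt with rfl | ha
  · rcases hb.eq_or_lt with rfl | hb
    · simp
    · have : 3 / 2 * ((0 - b) ^ 2 / (0 + 2 * b)) = 3 / 4 * b := by field_simp; ring
      rw [this]
      linarith
  · have hb : 0 < b := hb.lt_of_ne fun h => ha.ne' (hab h.symm)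
    have h := mul_nonneg hb.le (pinskerGap_nonneg (div_pos ha hb))
    have e : b * pinskerGap (a / b) =
        a * log (a / b) - (a - b + 3 / 2 * ((a - b) ^ 2 / (a + 2 * b))) := by
      unfold pinskerGap
      field_simp
      ring
    linarith

theorem sq_sum_abs_sub_le_two_mul_sum_mul_log_div {ι : Type*} [Fintype ι] {f g : ι → ℝ}
    (hf : ∀ i, 0 ≤ f i) (hg : ∀ i, 0 ≤ g i) (hfg : ∀ i, g i = 0 → f i = 0)
    (hf1 : ∑ i, f i = 1) (hg1 : ∑ i, g i = 1) :
    (∑ i, |f i - g i|) ^ 2 ≤ 2 * ∑ i, f i * log (f i / g i) := by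
  have hpos : ∀ i, 0 ≤ f i + 2 * g i := fun i => by linarith [hf i, hg i]
  have hCS : (∑ i, |f i - g i|) ^ 2 ≤
      (∑ i, (f i - g i) ^ 2 / (f i + 2 * g i)) * ∑ i, (f i + 2 * g i) := by
    refine sum_sq_le_sum_mul_sum_of_sq_le_mul _ (fun i _ => div_nonneg (sq_nonneg _) (hpos i))
      (fun i _ => hpos i) fun i _ => ?_
    rcases (hpos i).eq_or_lt with h | h
    · obtain ⟨hfi, hgi⟩ : f i = 0 ∧ g i = 0 := ⟨by linarith [hf i, hg i], by linarith [hf i, hg i]⟩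
      simp [hfi, hgi]
    · rw [sq_abs, div_mul_cancel₀ _ h.ne']
  have hthree : ∑ i, (f i + 2 * g i) = 3 := by
    rw [sum_add_distrib, ← mul_sum, hf1, hg1]; norm_num
  have hpointwise := sum_le_sum fun i (_ : i ∈ (univ : Finset ι)) =>
    sub_add_sq_div_le_mul_log_div (hf i) (hg i) (hfg i)
  rw [sum_add_distrib, sum_sub_distrib, hf1, hg1, ← mul_sum] at hpointwise
  rw [hthree] at hCS
  linarith

namespace Real

variable {ι : Type*}

lemma negMulLog_sum_le_sum_negMulLog (s : Finset ι) {w : ι → ℝ} (hw : ∀ i ∈ s, 0 ≤ w i) :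
    negMulLog (∑ i ∈ s, w i) ≤ ∑ i ∈ s, negMulLog (w i) := by
  rw [negMulLog, neg_mul, sum_mul, ← sum_neg_distrib]
  refine sum_le_sum fun i hi => ?_
  rcases (hw i hi).eq_or_lt with h | h
  · simp [← h]
  · rw [negMulLog, neg_mul, neg_le_neg_iff]
    exact mul_le_mul_of_nonneg_left (log_le_log h (single_le_sum hw hi)) h.le

lemma sum_negMulLog_eq_mul_sum_negMulLog_div_add (s : Finset ι) {w : ι → ℝ}
    (hw : ∀ i ∈ s, 0 ≤ w i) :
    ∑ i ∈ s, negMulLog (w i) =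
      (∑ i ∈ s, w i) * ∑ i ∈ s, negMulLog (w i / ∑ j ∈ s, w j) + negMulLog (∑ i ∈ s, w i) := by
  set c := ∑ i ∈ s, w i
  obtain hc | hc : 0 = c ∨ 0 < c := (sum_nonneg hw).eq_or_lt
  · have hw0 : ∀ i ∈ s, w i = 0 := (sum_eq_zero_iff_of_nonneg hw).mp hc.symm
    rw [← hc, zero_mul, zero_add, negMulLog_zero]
    exact sum_eq_zero fun i hi => by rw [hw0 i hi, negMulLog_zero]
  · have hsplit : ∀ i ∈ s, negMulLog (w i) = w i / c * negMulLog c + c * negMulLog (w i / c) :=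
      fun i _ => by rw [← negMulLog_mul, mul_div_cancel₀ _ hc.ne']
    rw [sum_congr rfl hsplit, sum_add_distrib, ← sum_mul, ← mul_sum, ← sum_div,
      div_self hc.ne', one_mul, add_comm]

lemma sum_negMulLog_le_negMulLog_sum_add_mul_log_card (s : Finset ι) {w : ι → ℝ}
    (hw : ∀ i ∈ s, 0 ≤ w i) :
    ∑ i ∈ s, negMulLog (w i) ≤ negMulLog (∑ i ∈ s, w i) + (∑ i ∈ s, w i) * log #s := by
  rcases s.eq_empty_or_nonempty with rfl | hs
  · simp
  have hn : (0 : ℝ) < #s := by exact_mod_cast hs.card_pos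
  have hJensen := concaveOn_negMulLog.le_map_sum (t := s) (w := fun _ => (#s : ℝ)⁻¹)
    (fun _ _ => by positivity) (by simp [hn.ne']) hw
  have hscale : negMulLog ((#s : ℝ)⁻¹ * ∑ i ∈ s, w i) =
      (#s : ℝ)⁻¹ * (negMulLog (∑ i ∈ s, w i) + (∑ i ∈ s, w i) * log #s) := by
    rw [negMulLog_mul, negMulLog, log_inv]
    ring
  simp only [smul_eq_mul, ← mul_sum, hscale] at hJensen
  exact le_of_mul_le_mul_left hJensen (inv_pos.mpr hn)

lemma qaryEntropy_eq_log_natSub_mul_add (q : ℕ) (p : ℝ) :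
    qaryEntropy q p = log ((q - 1 : ℕ) : ℝ) * p + (negMulLog p + negMulLog (1 - p)) := by
  rw [qaryEntropy, binEntropy_eq_negMulLog_add_negMulLog_one_sub, mul_comm]
  rcases q with _ | q
  · simp [log_neg_eq_log]
  · simp

variable [Fintype ι]

/-- Fano's inequality for the constant estimate `j`. -/
lemma sum_negMulLog_le_qaryEntropy {w : ι → ℝ} (hw : ∀ i, 0 ≤ w i) (hw1 : ∑ i, w i = 1) (j : ι) :
    ∑ i, negMulLog (w i) ≤ qaryEntropy (Fintype.card ι) (1 - w j) := by
  classical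
  have hrest : ∑ i ∈ univ.erase j, w i = 1 - w j := by rw [sum_erase_eq_sub (mem_univ j), hw1]
  have hcard : #(univ.erase j) = Fintype.card ι - 1 := by
    rw [card_erase_of_mem (mem_univ j), card_univ]
  have hbound := sum_negMulLog_le_negMulLog_sum_add_mul_log_card (univ.erase j) fun i _ => hw i
  rw [hrest, hcard] at hbound
  rw [← add_sum_erase _ _ (mem_univ j), qaryEntropy_eq_log_natSub_mul_add, sub_sub_cancel]
  linarith

/-- Fano's inequality for a joint distribution `q` of `(U, V)` on `ι × ι`:
`H(U) ≤ H(U, V) = H(V) + H(U | V)` and `H(U | V) ≤ qaryEntropy |ι| P(U ≠ V)`. -/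
lemma sum_negMulLog_sum_le_add_qaryEntropy {q : ι → ι → ℝ} (hq : ∀ x y, 0 ≤ q x y)
    (hq1 : ∑ x, ∑ y, q x y = 1) :
    ∑ x, negMulLog (∑ y, q x y) ≤
      ∑ y, negMulLog (∑ x, q x y) + qaryEntropy (Fintype.card ι) (1 - ∑ x, q x x) := by
  set v : ι → ℝ := fun y => ∑ x, q x y
  have hv : ∀ y, 0 ≤ v y := fun y => sum_nonneg fun x _ => hq x y
  have hv1 : ∑ y, v y = 1 := by rw [sum_comm]; exact hq1
  have hdiag_le : ∀ y, q y y ≤ v y := fun y => single_le_sum (fun x _ => hq x y) (mem_univ y)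
  set ε : ι → ℝ := fun y => 1 - q y y / v y
  have hε : ∀ y, ε y ∈ Icc (0 : ℝ) 1 := fun y =>
    ⟨sub_nonneg.mpr (div_le_one_of_le₀ (hdiag_le y) (hv y)),
      sub_le_self _ (div_nonneg (hq y y) (hv y))⟩
  have hvε : ∀ y, v y * ε y = v y - q y y := fun y => by
    rcases (hv y).eq_or_lt with h | h
    · have : q y y = 0 := le_antisymm (h ▸ hdiag_le y) (hq y y)
      simp [← h, this]
    · rw [mul_sub, mul_one, mul_div_cancel₀ _ h.ne']
  have hcolumn : ∀ y, v y * ∑ x, negMulLog (q x y / v y) ≤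
      v y * qaryEntropy (Fintype.card ι) (ε y) := fun y => by
    rcases (hv y).eq_or_lt with h | h
    · simp [← h]
    · refine mul_le_mul_of_nonneg_left (sum_negMulLog_le_qaryEntropy
        (fun x => div_nonneg (hq x y) h.le) ?_ y) h.le
      rw [← sum_div, div_self h.ne']
  have hJensen := (strictConcaveOn_qaryEntropy (q := Fintype.card ι)).concaveOn.le_map_sum
    (t := univ) (fun y _ => hv y) hv1 fun y _ => hε y
  simp only [smul_eq_mul, hvε, sum_sub_distrib, hv1] at hJensen
  calc ∑ x, negMulLog (∑ y, q x y)
      ≤ ∑ y, ∑ x, negMulLog (q x y) := by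
        rw [sum_comm]
        exact sum_le_sum fun x _ => negMulLog_sum_le_sum_negMulLog _ fun y _ => hq x y
    _ = ∑ y, (v y * ∑ x, negMulLog (q x y / v y) + negMulLog (v y)) :=
        sum_congr rfl fun y _ =>
          sum_negMulLog_eq_mul_sum_negMulLog_div_add _ fun x _ => hq x y
    _ ≤ ∑ y, (v y * qaryEntropy (Fintype.card ι) (ε y) + negMulLog (v y)) :=
        sum_le_sum fun y _ => add_le_add_left (hcolumn y) _
    _ ≤ _ := by
        rw [sum_add_distrib, add_comm]
        gcongr

/-- A maximal coupling of `u` and `v`: it agrees on the diagonal with `min u v` and spreads the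
excess masses `u - min u v` and `v - min u v` off the diagonal as a product. -/
lemma exists_coupling_sum_diag_eq_sum_min {u v : ι → ℝ} (hu : ∀ i, 0 ≤ u i) (hv : ∀ i, 0 ≤ v i)
    (hu1 : ∑ i, u i = 1) (hv1 : ∑ i, v i = 1) :
    ∃ q : ι → ι → ℝ, (∀ x y, 0 ≤ q x y) ∧ (∀ x, ∑ y, q x y = u x) ∧
      (∀ y, ∑ x, q x y = v y) ∧ ∑ x, q x x = ∑ x, min (u x) (v x) := by
  classical
  set m : ι → ℝ := fun i => min (u i) (v i)
  set a : ι → ℝ := fun i => u i - m i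
  set b : ι → ℝ := fun i => v i - m i
  set δ := 1 - ∑ i, m i
  have ha : ∀ i, 0 ≤ a i := fun i => sub_nonneg.mpr (min_le_left _ _)
  have hb : ∀ i, 0 ≤ b i := fun i => sub_nonneg.mpr (min_le_right _ _)
  have hab : ∀ i, a i * b i = 0 := fun i => by
    rcases min_choice (u i) (v i) with h | h <;> simp [a, b, m, h]
  have hsa : ∑ i, a i = δ := by simp only [a, sum_sub_distrib, hu1, δ]
  have hsb : ∑ i, b i = δ := by simp only [b, sum_sub_distrib, hv1, δ]
  have hcancel : ∀ {c : ι → ℝ}, (∀ i, 0 ≤ c i) → ∑ i, c i = δ → ∀ i, c i * δ / δ = c i := by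
    intro c hc hsc i
    rcases eq_or_ne δ 0 with h | h
    · simp [(sum_eq_zero_iff_of_nonneg fun i _ => hc i).mp (hsc.trans h) i (mem_univ i)]
    · exact mul_div_cancel_right₀ _ h
  refine ⟨fun x y => (if x = y then m x else 0) + a x * b y / δ, fun x y => ?_, fun x => ?_,
    fun y => ?_, ?_⟩
  · refine add_nonneg ?_ (div_nonneg (mul_nonneg (ha x) (hb y)) ?_)
    · split_ifs
      · exact le_min (hu x) (hv x)
      · rfl
    · rw [← hsa]; exact sum_nonneg fun i _ => ha i
  · rw [sum_add_distrib, ← sum_div, ← mul_sum, hsb, hcancel ha hsa, sum_ite_eq]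
    simp [a]
  · rw [sum_add_distrib, ← sum_div, ← sum_mul, hsa, mul_comm, hcancel hb hsb, sum_ite_eq']
    simp [b]
  · simp [hab]

lemma half_sum_abs_sub_eq_one_sub_sum_min {u v : ι → ℝ} (hu1 : ∑ i, u i = 1)
    (hv1 : ∑ i, v i = 1) :
    1 / 2 * ∑ i, |u i - v i| = 1 - ∑ i, min (u i) (v i) := by
  have h : ∀ i, |u i - v i| = u i + v i - 2 * min (u i) (v i) := fun i => by
    rw [abs_sub_comm, ← max_sub_min_eq_abs, ← min_add_max (u i) (v i)]
    ring
  simp only [h, sum_sub_distrib, sum_add_distrib, ← mul_sum, hu1, hv1]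
  ring

/-- One half of the Fannes–Audenaert continuity bound for Shannon entropy. -/
lemma sum_negMulLog_sub_sum_negMulLog_le_qaryEntropy {u v : ι → ℝ} (hu : ∀ i, 0 ≤ u i)
    (hv : ∀ i, 0 ≤ v i) (hu1 : ∑ i, u i = 1) (hv1 : ∑ i, v i = 1) :
    ∑ i, negMulLog (u i) - ∑ i, negMulLog (v i) ≤
      qaryEntropy (Fintype.card ι) (1 / 2 * ∑ i, |u i - v i|) := by
  obtain ⟨q, hq, hrow, hcol, hdiag⟩ := exists_coupling_sum_diag_eq_sum_min hu hv hu1 hv1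
  have hFano := sum_negMulLog_sum_le_add_qaryEntropy hq (by simp only [hrow, hu1])
  simp only [hrow, hcol, hdiag] at hFano
  rw [half_sum_abs_sub_eq_one_sub_sum_min hu1 hv1]
  linarith

end Real

section MutualInformation

variable {X Y : Type*}

noncomputable def fstMarginal [Fintype Y] (p : X → Y → ℝ) (x : X) : ℝ := ∑ y, p x y

noncomputable def sndMarginal [Fintype X] (p : X → Y → ℝ) (y : Y) : ℝ := ∑ x, p x y

lemma le_fstMarginal [Fintype Y] {p : X → Y → ℝ} (hp : ∀ x y, 0 ≤ p x y) (x : X) (y : Y) :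
    p x y ≤ fstMarginal p x :=
  single_le_sum (fun y _ => hp x y) (mem_univ y)

lemma le_sndMarginal [Fintype X] {p : X → Y → ℝ} (hp : ∀ x y, 0 ≤ p x y) (x : X) (y : Y) :
    p x y ≤ sndMarginal p y :=
  single_le_sum (fun x _ => hp x y) (mem_univ x)

lemma sndMarginal_mul_div_sndMarginal [Fintype X] {p : X → Y → ℝ} (hp : ∀ x y, 0 ≤ p x y)
    (x : X) (y : Y) : sndMarginal p y * (p x y / sndMarginal p y) = p x y := by
  rcases eq_or_ne (sndMarginal p y) 0 with h | h
  · rw [h, zero_mul, le_antisymm (h ▸ le_sndMarginal hp x y) (hp x y)]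
  · exact mul_div_cancel₀ _ h

lemma fstMarginal_nonneg [Fintype Y] {p : X → Y → ℝ} (hp : ∀ x y, 0 ≤ p x y) (x : X) :
    0 ≤ fstMarginal p x :=
  sum_nonneg fun y _ => hp x y

lemma sndMarginal_nonneg [Fintype X] {p : X → Y → ℝ} (hp : ∀ x y, 0 ≤ p x y) (y : Y) :
    0 ≤ sndMarginal p y :=
  sum_nonneg fun x _ => hp x y

variable [Fintype X] [Fintype Y]

lemma sum_sndMarginal {p : X → Y → ℝ} (hsum : ∑ x, ∑ y, p x y = 1) :
    ∑ y, sndMarginal p y = 1 := by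
  rw [← hsum, sum_comm]
  rfl

noncomputable def mutualInfo (p : X → Y → ℝ) : ℝ :=
  ∑ x, ∑ y, p x y * log (p x y / (fstMarginal p x * sndMarginal p y))

/-- `T(X;Y) = d_TV(P_XY, P_X × P_Y)`. -/
noncomputable def tvDistToIndep (p : X → Y → ℝ) : ℝ :=
  1 / 2 * ∑ x, ∑ y, |p x y - fstMarginal p x * sndMarginal p y|

lemma mutualInfo_swap (p : X → Y → ℝ) : mutualInfo (fun y x => p x y) = mutualInfo p := by
  rw [mutualInfo, sum_comm]
  simp only [mutualInfo, fstMarginal, sndMarginal, mul_comm]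

lemma tvDistToIndep_swap (p : X → Y → ℝ) :
    tvDistToIndep (fun y x => p x y) = tvDistToIndep p := by
  rw [tvDistToIndep, sum_comm]
  simp only [tvDistToIndep, fstMarginal, sndMarginal, mul_comm]

variable {p : X → Y → ℝ}

lemma mutualInfo_eq_add_sub (hp : ∀ x y, 0 ≤ p x y) :
    mutualInfo p = ∑ x, negMulLog (fstMarginal p x) + ∑ y, negMulLog (sndMarginal p y) -
      ∑ x, ∑ y, negMulLog (p x y) := by
  have hterm : ∀ x y, p x y * log (p x y / (fstMarginal p x * sndMarginal p y)) =
      -p x y * log (fstMarginal p x) - p x y * log (sndMarginal p y) - negMulLog (p x y) := by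
    intro x y
    rcases (hp x y).eq_or_lt with h | h
    · simp [← h]
    · have hx := h.trans_le (le_fstMarginal hp x y)
      have hy := h.trans_le (le_sndMarginal hp x y)
      rw [log_div h.ne' (by positivity), log_mul hx.ne' hy.ne', negMulLog]
      ring
  have hX : ∀ x, ∑ y, -p x y * log (fstMarginal p x) = negMulLog (fstMarginal p x) := fun x => by
    rw [← sum_mul, sum_neg_distrib, negMulLog, fstMarginal]
  have hY : ∑ x, ∑ y, p x y * log (sndMarginal p y) = -∑ y, negMulLog (sndMarginal p y) := by
    rw [sum_comm, ← sum_neg_distrib]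
    exact sum_congr rfl fun y _ => by rw [← sum_mul, negMulLog, sndMarginal]; ring
  simp only [mutualInfo, hterm, sum_sub_distrib, hX, hY]
  ring

lemma mutualInfo_eq_sum_mul_sub (hp : ∀ x y, 0 ≤ p x y) (hsum : ∑ x, ∑ y, p x y = 1) :
    mutualInfo p = ∑ y, sndMarginal p y *
      (∑ x, negMulLog (fstMarginal p x) - ∑ x, negMulLog (p x y / sndMarginal p y)) := by
  have hchain : ∀ y, ∑ x, negMulLog (p x y) = sndMarginal p y *
      ∑ x, negMulLog (p x y / sndMarginal p y) + negMulLog (sndMarginal p y) :=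
    fun y => sum_negMulLog_eq_mul_sum_negMulLog_div_add _ fun x _ => hp x y
  rw [mutualInfo_eq_add_sub hp, sum_comm (f := fun x y => negMulLog (p x y))]
  simp only [hchain, mul_sub, sum_sub_distrib, sum_add_distrib, ← sum_mul, sum_sndMarginal hsum]
  ring

lemma mutualInfo_le_qaryEntropy (hp : ∀ x y, 0 ≤ p x y) (hsum : ∑ x, ∑ y, p x y = 1) :
    mutualInfo p ≤ qaryEntropy (Fintype.card X) (tvDistToIndep p) := by
  have hX := fstMarginal_nonneg hp
  have hY := sndMarginal_nonneg hp
  have hX1 : ∑ x, fstMarginal p x = 1 := hsum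
  have hY1 := sum_sndMarginal hsum
  set pY := sndMarginal p
  set Δ : Y → ℝ := fun y => 1 / 2 * ∑ x, |fstMarginal p x - p x y / pY y|
  have hΔ : ∀ y, Δ y ∈ Icc (0 : ℝ) 1 := fun y => by
    refine ⟨by positivity, ?_⟩
    have hcond : ∑ x, p x y / pY y ≤ 1 := by rw [← sum_div]; exact div_self_le_one _
    have htri : ∑ x, |fstMarginal p x - p x y / pY y| ≤ ∑ x, (fstMarginal p x + p x y / pY y) :=
      sum_le_sum fun x _ => (abs_sub _ _).trans_eq <| by
        rw [abs_of_nonneg (hX x), abs_of_nonneg (div_nonneg (hp x y) (hY y))]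
    rw [sum_add_distrib, hX1] at htri
    simp only [Δ]
    linarith
  have hΔsum : ∑ y, pY y * Δ y = tvDistToIndep p := by
    have hy : ∀ y, pY y * Δ y = 1 / 2 * ∑ x, |p x y - fstMarginal p x * pY y| := fun y => by
      simp only [Δ, mul_left_comm (pY y), mul_sum]
      refine sum_congr rfl fun x _ => congrArg _ ?_
      rw [← abs_of_nonneg (hY y), ← abs_mul, abs_of_nonneg (hY y), mul_sub,
        sndMarginal_mul_div_sndMarginal hp, abs_sub_comm, mul_comm]
    rw [sum_congr rfl fun y _ => hy y, ← mul_sum, sum_comm]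
    rfl
  have hFannes : ∀ y, pY y * (∑ x, negMulLog (fstMarginal p x) - ∑ x, negMulLog (p x y / pY y)) ≤
      pY y * qaryEntropy (Fintype.card X) (Δ y) := fun y => by
    rcases (hY y).eq_or_lt with h | h
    · simp [← h]
    · refine mul_le_mul_of_nonneg_left (sum_negMulLog_sub_sum_negMulLog_le_qaryEntropy hX
        (fun x => div_nonneg (hp x y) h.le) hX1 ?_) h.le
      rw [← sum_div]
      exact div_self h.ne'
  have hJensen := (strictConcaveOn_qaryEntropy (q := Fintype.card X)).concaveOn.le_map_sum
    (t := univ) (fun y _ => hY y) hY1 fun y _ => hΔ y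
  simp only [smul_eq_mul, hΔsum] at hJensen
  rw [mutualInfo_eq_sum_mul_sub hp hsum]
  exact (sum_le_sum fun y _ => hFannes y).trans hJensen

lemma two_mul_sq_tvDistToIndep_le_mutualInfo (hp : ∀ x y, 0 ≤ p x y)
    (hsum : ∑ x, ∑ y, p x y = 1) : 2 * tvDistToIndep p ^ 2 ≤ mutualInfo p := by
  have hac : ∀ i : X × Y, fstMarginal p i.1 * sndMarginal p i.2 = 0 → p i.1 i.2 = 0 := by
    rintro ⟨x, y⟩ h
    rcases mul_eq_zero.mp h with h | h
    · exact le_antisymm (h ▸ le_fstMarginal hp x y) (hp x y)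
    · exact le_antisymm (h ▸ le_sndMarginal hp x y) (hp x y)
  have hPinsker := sq_sum_abs_sub_le_two_mul_sum_mul_log_div (fun i : X × Y => hp i.1 i.2)
    (fun i : X × Y => mul_nonneg (fstMarginal_nonneg hp i.1) (sndMarginal_nonneg hp i.2)) hac
    (by rw [Fintype.sum_prod_type]; exact hsum)
    (by rw [Fintype.sum_prod_type, ← sum_mul_sum, sum_sndMarginal hsum, mul_one]; exact hsum)
  simp only [Fintype.sum_prod_type] at hPinsker
  rw [tvDistToIndep, mutualInfo]
  linarith

end MutualInformation

/-- Pinsker-type bounds for finite alphabets.  For a joint pmf `p` on `X × Y` with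
marginals `pX`, `pY`, total-variation distance `T = d_TV(P_{XY}, P_X × P_Y)` (equal to
half the ℓ¹ distance) and mutual information `I(X;Y)` in nats, we have
`I ≥ 2·T²` and `I ≤ log(min(|X|,|Y|) − 1)·T + h_b(T)`. -/
theorem stmt_15 {X Y : Type} [Fintype X] [Fintype Y]
    (p : X → Y → ℝ) (hp : ∀ x y, 0 ≤ p x y) (hsum : ∑ x, ∑ y, p x y = 1) :
    let pX : X → ℝ := fun x => ∑ y, p x y
    let pY : Y → ℝ := fun y => ∑ x, p x y
    let T : ℝ := (1 / 2) * ∑ x, ∑ y, |p x y - pX x * pY y|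
    let I : ℝ := ∑ x, ∑ y, p x y * Real.log (p x y / (pX x * pY y))
    2 * T ^ 2 ≤ I ∧
      I ≤ Real.log ((min (Fintype.card X) (Fintype.card Y) - 1 : ℕ) : ℝ) * T +
            (negMulLog T + negMulLog (1 - T)) := by
  intro pX pY T I
  have hT : T = tvDistToIndep p := rfl
  have hI : I = mutualInfo p := rfl
  rw [hT, hI, ← qaryEntropy_eq_log_natSub_mul_add]
  refine ⟨two_mul_sq_tvDistToIndep_le_mutualInfo hp hsum, ?_⟩
  rcases le_total (Fintype.card X) (Fintype.card Y) with h | h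
  · rw [min_eq_left h]
    exact mutualInfo_le_qaryEntropy hp hsum
  · rw [min_eq_right h, ← mutualInfo_swap, ← tvDistToIndep_swap]
    exact mutualInfo_le_qaryEntropy (fun y x => hp x y) (by rw [sum_comm]; exact hsum)
end
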